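/- Suppose Σ is the disjoint union of two mutually independent alphabets Σ₁, Σ₂ (every a ∈ Σ₁ is independent of every b ∈ Σ₂), and A is an I-diamond DFA over Σ. Then for every word w ∈ Σ*, Δ(s₀, w) = Δ(s₀, w₁w₂) where wᵢ is the projection of w onto Σᵢ; in particular w ∈ L(A) iff w₁w₂ ∈ L(A), and membership of w in L(A) is determined by the pair (Δ(s₀,w₁), Δ(s₀,w₂)) via Diam(s₀, Δ(s₀,w₁), Δ(s₀,w₂), Σ₂). -/
import Mathlib


/-- A deterministic finite automaton with a partial transition function. -/
structure PDFA (A S : Type) where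
  step : S → A → Option S
  s0 : S
  F : Set S

/-- Extension of the partial transition function to words. -/
def PDFA.stepw {A S : Type} (M : PDFA A S) : S → List A → Option S
  | s, [] => some s
  | s, a :: u => (M.step s a).bind fun t => M.stepw t u

/-- The I-diamond property: independent letters commute (as partial values). -/
def IDiamond {A S : Type} (M : PDFA A S) (I : A → A → Prop) : Prop :=
  ∀ a b, I a b → ∀ s, M.stepw s [a, b] = M.stepw s [b, a]

def PDFA.Accepts {A S : Type} (M : PDFA A S) (w : List A) : Prop :=
  ∃ s ∈ M.F, M.stepw M.s0 w = some s

/-- `Interleave u v w` : `w` is an interleaving (shuffle) of `u` and `v`. -/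
inductive Interleave {A : Type} : List A → List A → List A → Prop
  | nil : Interleave [] [] []
  | left {a u v w} : Interleave u v w → Interleave (a :: u) v (a :: w)
  | right {a u v w} : Interleave u v w → Interleave u (a :: v) (a :: w)

/-- Specification of the diamond-combination function `Diam`. -/
def DiamSpec {A S : Type} (M : PDFA A S) (I : A → A → Prop)
    (Diam : S → S → S → Set A → Option S) : Prop :=
  ∀ (s s₁ s₂ : S) (C₂ : Set A) (w₁ w₂ : List A),
    (∀ a ∈ w₁, ∀ b ∈ C₂, I a b) → (∀ a ∈ w₂, a ∈ C₂) →
    M.stepw s w₁ = some s₁ → M.stepw s w₂ = some s₂ →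
    Diam s s₁ s₂ C₂ = M.stepw s (w₁ ++ w₂)

lemma stepw_append {A S : Type} (M : PDFA A S) (u v : List A) (s : S) :
    M.stepw s (u ++ v) = (M.stepw s u).bind fun t => M.stepw t v := by
  induction u generalizing s with
  | nil => simp [PDFA.stepw]
  | cons a u ih =>
    simp only [List.cons_append, PDFA.stepw, Option.bind_assoc]
    cases M.step s a with
    | none => rfl
    | some t => simp [ih]

lemma swap_step {A S : Type} {M : PDFA A S} {I : A → A → Prop} (hd : IDiamond M I)
    {a b : A} (hab : I a b) (u : List A) (s : S) :
    M.stepw s (a :: b :: u) = M.stepw s (b :: a :: u) := by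
  have h := hd a b hab s
  rw [show a :: b :: u = [a, b] ++ u from rfl, stepw_append, h,
    show b :: a :: u = [b, a] ++ u from rfl, stepw_append]

lemma bubble {A S : Type} {M : PDFA A S} {I : A → A → Prop} (hd : IDiamond M I)
    {b : A} (u : List A) (hu : ∀ a ∈ u, I b a) (s : S) :
    M.stepw s (b :: u) = M.stepw s (u ++ [b]) := by
  induction u generalizing s with
  | nil => rfl
  | cons a u ih =>
    have h1 := swap_step hd (hu a (by simp)) u s
    rw [h1]
    simp only [List.cons_append, PDFA.stepw]
    cases M.step s a with
    | none => rfl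
    | some t =>
      have := ih (fun c hc => hu c (by simp [hc])) t
      simpa [PDFA.stepw] using this

lemma interleave_step {A S : Type} {M : PDFA A S} {I : A → A → Prop} (hd : IDiamond M I) (hsym : Symmetric I)
    {u v w : List A} (h : Interleave u v w) (hind : ∀ a ∈ u, ∀ b ∈ v, I a b) (s : S) :
    M.stepw s w = M.stepw s (u ++ v) := by
  induction h generalizing s with
  | nil => rfl
  | @left a u v w h ih =>
    simp only [List.cons_append, PDFA.stepw]
    cases M.step s a with
    | none => rfl
    | some t =>
      simp [ih (fun c hc d hd' => hind c (by simp [hc]) d hd') t]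
  | @right b u v w h ih =>
    have step1 : M.stepw s (b :: w) = M.stepw s (b :: (u ++ v)) := by
      simp only [PDFA.stepw]
      cases M.step s b with
      | none => rfl
      | some t =>
        simp [ih (fun c hc d hd' => hind c hc d (by simp [hd'])) t]
    have hb : ∀ a ∈ u, I b a := fun a ha => hsym (hind a ha b (by simp))
    have step2 := bubble hd u hb
    rw [step1]
    have h3 := stepw_append M [b] (u ++ v) s
    have h4 := stepw_append M (b :: u) v s
    have h5 := stepw_append M (u ++ [b]) v s
    have : M.stepw s (b :: (u ++ v)) = M.stepw s ((b :: u) ++ v) := by simp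
    rw [this, h4, step2 s, ← h5]
    simp

theorem stmt13 {A S : Type} (I : A → A → Prop) (hsym : Symmetric I)
    (hirr : ∀ a, ¬ I a a) (M : PDFA A S) (hd : IDiamond M I)
    (A₁ A₂ : Set A)
    (hpart : ∀ a : A, (a ∈ A₁ ∨ a ∈ A₂) ∧ ¬ (a ∈ A₁ ∧ a ∈ A₂))
    (hind : ∀ a ∈ A₁, ∀ b ∈ A₂, I a b)
    (w w₁ w₂ : List A)
    -- w₁, w₂ are the projections of w onto A₁ and A₂
    (hproj : Interleave w₁ w₂ w)
    (h1 : ∀ a ∈ w₁, a ∈ A₁) (h2 : ∀ a ∈ w₂, a ∈ A₂) :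
    M.stepw M.s0 w = M.stepw M.s0 (w₁ ++ w₂) ∧
    (M.Accepts w ↔ M.Accepts (w₁ ++ w₂)) ∧
    -- membership of w in L(A) is determined by (Δ(s₀,w₁), Δ(s₀,w₂)) via Diam
    (∀ Diam : S → S → S → Set A → Option S, DiamSpec M I Diam →
      ∀ t₁ t₂ : S, M.stepw M.s0 w₁ = some t₁ → M.stepw M.s0 w₂ = some t₂ →
        (M.Accepts w ↔ ∃ s ∈ M.F, Diam M.s0 t₁ t₂ A₂ = some s)) := by
  have hkey : M.stepw M.s0 w = M.stepw M.s0 (w₁ ++ w₂) :=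
    interleave_step hd hsym hproj
      (fun a ha b hb => hind a (h1 a ha) b (h2 b hb)) M.s0
  refine ⟨hkey, ?_, ?_⟩
  · unfold PDFA.Accepts; rw [hkey]
  · intro Diam hDiam t₁ t₂ ht₁ ht₂
    have hD := hDiam M.s0 t₁ t₂ A₂ w₁ w₂
      (fun a ha b hb => hind a (h1 a ha) b hb) h2 ht₁ ht₂
    unfold PDFA.Accepts
    rw [hkey, hD]
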